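/- The L-module V(a,I) defined by (t1^m t2^n).v_k = (a q^k)^n v_{k+m} on the space with basis {v_k : k ∈ ℤ} is irreducible: every nonzero L-submodule equals V. -/
import Mathlib


/-- Action of the basis element `t1^{p.1} t2^{p.2}` of `L` on the basis vector `v_k`
of `V(a,I)`: `(t1^m t2^n).v_k = (a q^k)^n v_{k+m}`. -/
noncomputable def act (q a : ℂ) (p : ℤ × ℤ) (k : ℤ) : ℤ →₀ ℂ :=
  ((a * q ^ k) ^ p.2) • Finsupp.single (k + p.1) (1 : ℂ)

/-- The action extended linearly to all of `V(a,I)`. -/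
noncomputable def actExt (q a : ℂ) (p : ℤ × ℤ) (f : ℤ →₀ ℂ) : ℤ →₀ ℂ :=
  f.sum fun k c => c • act q a p k

lemma my_zpow_ne_one (q : ℂ) (hq0 : q ≠ 0) (hq : ∀ n : ℕ, 0 < n → q ^ n ≠ 1)
    {m : ℤ} (hm : m ≠ 0) : q ^ m ≠ 1 := by
  rcases lt_or_gt_of_ne hm with h | h
  · intro he
    have h1 : q ^ (-m) = 1 := by rw [zpow_neg, he, inv_one]
    have h2 : q ^ ((-m).toNat) = 1 := by
      rw [← zpow_natCast, Int.toNat_of_nonneg (by omega)]; exact h1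
    exact hq (-m).toNat (by omega) h2
  · intro he
    have h2 : q ^ (m.toNat) = 1 := by
      rw [← zpow_natCast, Int.toNat_of_nonneg (by omega)]; exact he
    exact hq m.toNat (by omega) h2

lemma qpow_inj (q : ℂ) (hq0 : q ≠ 0) (hq : ∀ n : ℕ, 0 < n → q ^ n ≠ 1)
    {i j : ℤ} (h : q ^ i = q ^ j) : i = j := by
  by_contra hne
  have : q ^ (i - j) = 1 := by
    rw [zpow_sub₀ hq0, h, div_self (zpow_ne_zero _ hq0)]
  exact my_zpow_ne_one q hq0 hq (sub_ne_zero.mpr hne) this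

lemma actExt_single (q a : ℂ) (p : ℤ × ℤ) (k : ℤ) (c : ℂ) :
    actExt q a p (Finsupp.single k c) = c • act q a p k := by
  unfold actExt
  exact Finsupp.sum_single_index (by simp)

lemma actExt_zero_one_apply (q a : ℂ) (f : ℤ →₀ ℂ) (i : ℤ) :
    actExt q a (0,1) f i = (a * q ^ i) * f i := by
  unfold actExt act
  simp only [zpow_one, add_zero, smul_smul, Finsupp.smul_single', mul_one]
  rw [Finsupp.sum_apply]
  simp only [Finsupp.single_apply]
  rw [Finsupp.sum_ite_eq' f i (fun k c => c * (a * q ^ k))]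
  split_ifs with h
  · ring
  · simp [Finsupp.notMem_support_iff.mp h]

/-- The module `V(a,I)` is irreducible: every nonzero `L`-submodule equals `V`. -/
theorem VaI_irreducible (q a : ℂ) (hq0 : q ≠ 0) (hq : ∀ n : ℕ, 0 < n → q ^ n ≠ 1)
    (ha : a ≠ 0) (W : Submodule ℂ (ℤ →₀ ℂ))
    (hW : ∀ p : ℤ × ℤ, p ≠ (0, 0) → ∀ v ∈ W, actExt q a p v ∈ W)
    (hne : W ≠ ⊥) : W = ⊤ := by
  have key : ∀ n : ℕ, ∀ f ∈ W, f.support.card ≤ n → ∀ k ∈ f.support,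
      Finsupp.single k (1 : ℂ) ∈ W := by
    intro n
    induction n with
    | zero =>
      intro f _ hc k hk
      rw [Nat.le_zero, Finset.card_eq_zero] at hc
      simp [hc] at hk
    | succ n ih =>
      intro f hf hc k hk
      have hfk : f k ≠ 0 := Finsupp.mem_support_iff.mp hk
      by_cases hsub : f.support ⊆ {k}
      · have hfe : f = Finsupp.single k (f k) :=
          Finsupp.support_subset_singleton.mp hsub
        have h1 : Finsupp.single k (1 : ℂ) = (f k)⁻¹ • f := by
          nth_rewrite 2 [hfe]
          rw [Finsupp.smul_single', inv_mul_cancel₀ hfk]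
        rw [h1]
        exact Submodule.smul_mem W _ hf
      · obtain ⟨j, hj, hjk⟩ : ∃ j ∈ f.support, j ≠ k := by
          rw [Finset.not_subset] at hsub
          obtain ⟨j, hj, hj'⟩ := hsub
          exact ⟨j, hj, by simpa using hj'⟩
        set g := actExt q a (0, 1) f - (a * q ^ j) • f with hgdef
        have hgW : g ∈ W :=
          Submodule.sub_mem _ (hW (0, 1) (by simp) f hf) (Submodule.smul_mem _ _ hf)
        have hgi : ∀ i, g i = (a * (q ^ i - q ^ j)) * f i := by
          intro i
          simp only [hgdef, Finsupp.sub_apply, Finsupp.smul_apply, actExt_zero_one_apply,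
            smul_eq_mul]
          ring
        have hsup : g.support ⊆ f.support.erase j := by
          intro i hi
          rw [Finsupp.mem_support_iff, hgi] at hi
          rw [Finset.mem_erase, Finsupp.mem_support_iff]
          constructor
          · rintro rfl; simp at hi
          · intro h0; simp [h0] at hi
        have hk' : k ∈ g.support := by
          rw [Finsupp.mem_support_iff, hgi]
          refine mul_ne_zero (mul_ne_zero ha ?_) hfk
          rw [sub_ne_zero]
          intro he
          exact hjk (qpow_inj q hq0 hq he).symm
        have hcard : g.support.card ≤ n := by
          have h1 := Finset.card_le_card hsup
          have h2 := Finset.card_erase_of_mem hj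
          omega
        exact ih g hgW hcard k hk'
  obtain ⟨v, hvW, hv0⟩ := Submodule.ne_bot_iff W |>.mp hne
  obtain ⟨k, hk⟩ := Finsupp.support_nonempty_iff.mpr hv0
  have h1 : Finsupp.single k (1 : ℂ) ∈ W := key v.support.card v hvW le_rfl k hk
  have hall : ∀ j : ℤ, Finsupp.single j (1 : ℂ) ∈ W := by
    intro j
    by_cases h : j = k
    · subst h; exact h1
    · have hp : ((j - k, 0) : ℤ × ℤ) ≠ (0, 0) := by
        simp [Prod.ext_iff, sub_eq_zero, h]
      have := hW (j - k, 0) hp _ h1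
      rw [actExt_single] at this
      simpa [act, add_sub_cancel] using this
  rw [eq_top_iff]
  intro f _
  rw [← Finsupp.sum_single f]
  refine Submodule.sum_mem W fun i _ => ?_
  have := Submodule.smul_mem W (f i) (hall i)
  rwa [Finsupp.smul_single', mul_one] at this
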